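/- Let l > 0 and let u be the vortex map on B_l. Then the L¹-relaxed area of the graph of u satisfies Ā(u, B_l) ≤ ∫_{B_l} √(1 + |∇u(x)|²) dx + π. -/

import Mathlib

open MeasureTheory Filter Metric Topology
open scoped ENNReal NNReal

noncomputable section

abbrev V2 : Type := EuclideanSpace ℝ (Fin 2)

/-- Squared Frobenius norm of (the matrix of) a continuous linear map on `ℝ²`. -/
def frobSq (L : V2 →L[ℝ] V2) : ℝ :=
  ∑ i : Fin 2, ∑ j : Fin 2, (L (EuclideanSpace.single j 1) i) ^ 2

/-- Determinant of (the matrix of) a continuous linear map on `ℝ²`. -/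
def detJ (L : V2 →L[ℝ] V2) : ℝ :=
  L (EuclideanSpace.single 0 1) 0 * L (EuclideanSpace.single 1 1) 1 -
    L (EuclideanSpace.single 1 1) 0 * L (EuclideanSpace.single 0 1) 1

/-- The vortex map `x ↦ x / |x|` (equal to `0` at the origin). -/
def vortex (x : V2) : V2 := ‖x‖⁻¹ • x

/-- The area integrand `√(1 + |∇v|² + (det ∇v)²)`. -/
def areaIntegrand (v : V2 → V2) (x : V2) : ℝ :=
  Real.sqrt (1 + frobSq (fderiv ℝ v x) + detJ (fderiv ℝ v x) ^ 2)

/-- Area of the graph of `v` over the set `E`. -/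
def graphArea (v : V2 → V2) (E : Set V2) : ℝ≥0∞ :=
  ∫⁻ x in E, ENNReal.ofReal (areaIntegrand v x)

/-- `∫_{B_l} √(1 + |∇u|²) dx` for the vortex map `u`. -/
def vortexGradArea (l : ℝ) : ℝ≥0∞ :=
  ∫⁻ x in ball (0 : V2) l, ENNReal.ofReal (Real.sqrt (1 + frobSq (fderiv ℝ vortex x)))

/-- The `L¹`-relaxed area of the graph of the vortex map over `B_l`:
the infimum of `liminf_k 𝒜(v_k, B_l)` over all sequences `(v_k)` of maps that are
`C¹` on `B_l` and converge to the vortex map in `L¹(B_l, ℝ²)`. -/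
def relaxedArea (l : ℝ) : ℝ≥0∞ :=
  sInf { a : ℝ≥0∞ | ∃ v : ℕ → V2 → V2,
    (∀ k, ContDiffOn ℝ 1 (v k) (ball (0 : V2) l)) ∧
    Tendsto (fun k => ∫⁻ x in ball (0 : V2) l, ENNReal.ofReal ‖v k x - vortex x‖)
      atTop (𝓝 0) ∧
    a = Filter.liminf (fun k => graphArea (v k) (ball (0 : V2) l)) atTop }

def w (ε : ℝ) (x : V2) : V2 := (Real.sqrt (‖x‖^2 + ε^2))⁻¹ • x

lemma vortex_eq_w0 : vortex = w 0 := by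
  funext x
  simp [vortex, w, Real.sqrt_sq (norm_nonneg x)]

def D (ε : ℝ) (x : V2) : V2 →L[ℝ] V2 :=
  (Real.sqrt (‖x‖^2 + ε^2))⁻¹ • ContinuousLinearMap.id ℝ V2
    - ((Real.sqrt (‖x‖^2 + ε^2))^3)⁻¹ • (ContinuousLinearMap.smulRight (innerSL ℝ x) x)

lemma hasFDerivAt_w (ε : ℝ) (x : V2) (h : 0 < ‖x‖^2 + ε^2) :
    HasFDerivAt (w ε) (D ε x) x := by
  set s := Real.sqrt (‖x‖^2 + ε^2) with hs
  have hs0 : 0 < s := Real.sqrt_pos.2 h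
  have h1 : HasFDerivAt (fun y : V2 => ‖y‖^2 + ε^2)
      ((2 : ℕ) • (innerSL ℝ x)) x := by
    simpa using (hasFDerivAt_id x).norm_sq.add_const (ε^2)
  have h2 : HasFDerivAt (fun y : V2 => Real.sqrt (‖y‖^2 + ε^2))
      ((1 / (2 * s)) • ((2 : ℕ) • (innerSL ℝ x))) x :=
    (Real.hasDerivAt_sqrt h.ne').comp_hasFDerivAt x h1
  have hinv : HasFDerivAt (fun y : V2 => (Real.sqrt (‖y‖^2 + ε^2))⁻¹)
      ((-(s^2)⁻¹) • ((1 / (2 * s)) • ((2:ℕ) • (innerSL ℝ x)))) x := by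
    simpa [Function.comp_def] using (hasDerivAt_inv hs0.ne').comp_hasFDerivAt x h2
  have h3 := hinv.smul (hasFDerivAt_id x)
  refine h3.congr_fderiv (Eq.symm ?_)
  ext y
  simp only [D, ContinuousLinearMap.coe_sub', Pi.sub_apply, ContinuousLinearMap.coe_smul',
    Pi.smul_apply, ContinuousLinearMap.coe_id', id_eq, ContinuousLinearMap.smulRight_apply,
    ContinuousLinearMap.add_apply, innerSL_apply_apply]
  rw [← hs]
  simp only [PiLp.sub_apply, PiLp.add_apply, PiLp.smul_apply, smul_eq_mul]
  have : s^3 = s^2 * s := by ring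
  field_simp
  ring

lemma D_apply (ε : ℝ) (x : V2) (j i : Fin 2) :
    (D ε x) (EuclideanSpace.single j 1) i
      = (Real.sqrt (‖x‖^2+ε^2))⁻¹ * (if j = i then 1 else 0)
        - ((Real.sqrt (‖x‖^2+ε^2))^3)⁻¹ * (x j * x i) := by
  simp only [D, ContinuousLinearMap.sub_apply, ContinuousLinearMap.smul_apply,
    ContinuousLinearMap.id_apply, ContinuousLinearMap.smulRight_apply, innerSL_apply_apply,
    PiLp.sub_apply, PiLp.smul_apply, smul_eq_mul]
  rw [EuclideanSpace.inner_single_right]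
  simp only [EuclideanSpace.single_apply]
  by_cases hji : j = i <;> simp [hji, eq_comm] <;> ring

lemma frobSq_D (ε : ℝ) (x : V2) (h : 0 < ‖x‖^2 + ε^2) :
    frobSq (D ε x) = (‖x‖^2+ε^2)⁻¹ + ε^4 / (‖x‖^2+ε^2)^3 := by
  have hnx : ‖x‖^2 = x 0^2 + x 1^2 := by
    rw [EuclideanSpace.norm_eq, Real.sq_sqrt (by positivity)]
    simp [Fin.sum_univ_two, sq_abs]
  set t := ‖x‖^2 + ε^2 with ht
  have ht0 : 0 < t := h
  set s := Real.sqrt t with hsdef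
  have hss : s^2 = t := Real.sq_sqrt ht0.le
  have hs0 : s ≠ 0 := by positivity
  have ha : s⁻¹ * s⁻¹ = t⁻¹ := by rw [← mul_inv, ← sq, hss]
  have hab : s⁻¹ * (s^3)⁻¹ = (t^2)⁻¹ := by
    rw [← mul_inv]; congr 1; rw [← hss]; ring
  have hb : (s^3)⁻¹ * (s^3)⁻¹ = (t^3)⁻¹ := by
    rw [← mul_inv]; congr 1; rw [← hss]; ring
  have hrt : x 0^2 + x 1^2 = t - ε^2 := by rw [ht, hnx]; ring
  have key : frobSq (D ε x)
      = 2*(s⁻¹ * s⁻¹) - 2*(s⁻¹*(s^3)⁻¹)*(x 0^2 + x 1^2)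
        + ((s^3)⁻¹*(s^3)⁻¹)*(x 0^2 + x 1^2)^2 := by
    simp only [frobSq, D_apply, Fin.sum_univ_two, ← hsdef, ← ht]
    norm_num
    ring
  rw [key, ha, hab, hb, hrt]
  field_simp
  ring

lemma detJ_D (ε : ℝ) (x : V2) (h : 0 < ‖x‖^2 + ε^2) :
    detJ (D ε x) = ε^2 / (‖x‖^2+ε^2)^2 := by
  have hnx : ‖x‖^2 = x 0^2 + x 1^2 := by
    rw [EuclideanSpace.norm_eq, Real.sq_sqrt (by positivity)]
    simp [Fin.sum_univ_two, sq_abs]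
  set t := ‖x‖^2 + ε^2 with ht
  have ht0 : 0 < t := h
  set s := Real.sqrt t with hsdef
  have hss : s^2 = t := Real.sq_sqrt ht0.le
  have hs0 : s ≠ 0 := by positivity
  have ha : s⁻¹ * s⁻¹ = t⁻¹ := by rw [← mul_inv, ← sq, hss]
  have hab : s⁻¹ * (s^3)⁻¹ = (t^2)⁻¹ := by
    rw [← mul_inv]; congr 1; rw [← hss]; ring
  have hrt : x 0^2 + x 1^2 = t - ε^2 := by rw [ht, hnx]; ring
  have key : detJ (D ε x)
      = (s⁻¹ * s⁻¹) - (s⁻¹*(s^3)⁻¹)*(x 0^2 + x 1^2) := by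
    simp only [detJ, D_apply, Fin.sum_univ_two, ← hsdef, ← ht]
    norm_num
    ring
  rw [key, ha, hab, hrt]
  field_simp
  ring

lemma contDiff_w (ε : ℝ) (hε : ε ≠ 0) : ContDiff ℝ 1 (w ε) := by
  rw [contDiff_iff_contDiffAt]
  intro x
  have h : (0:ℝ) < ‖x‖^2 + ε^2 := by positivity
  have h1 : ContDiffAt ℝ 1 (fun y : V2 => ‖y‖^2 + ε^2) x :=
    ((contDiff_norm_sq ℝ).add contDiff_const).contDiffAt
  have h2 : ContDiffAt ℝ 1 (fun y : V2 => Real.sqrt (‖y‖^2 + ε^2)) x :=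
    (Real.contDiffAt_sqrt h.ne').comp x h1
  have h3 : ContDiffAt ℝ 1 (fun y : V2 => (Real.sqrt (‖y‖^2 + ε^2))⁻¹) x :=
    h2.inv (by positivity)
  exact h3.smul contDiffAt_id

lemma fderiv_w (ε : ℝ) (x : V2) (h : 0 < ‖x‖^2 + ε^2) :
    fderiv ℝ (w ε) x = D ε x := (hasFDerivAt_w ε x h).fderiv

lemma sqrt_one_add_sq_le (a : ℝ) (ha : 0 ≤ a) : Real.sqrt (1 + a^2) ≤ 1 + a := by
  rw [show (1:ℝ) + a = Real.sqrt ((1+a)^2) from (Real.sqrt_sq (by linarith)).symm]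
  apply Real.sqrt_le_sqrt; nlinarith

lemma frobSq_vortex (x : V2) (hx : x ≠ 0) :
    frobSq (fderiv ℝ vortex x) = (‖x‖^2)⁻¹ := by
  have h : (0:ℝ) < ‖x‖^2 + 0^2 := by
    have := norm_pos_iff.2 hx; positivity
  rw [vortex_eq_w0, fderiv_w 0 x h, frobSq_D 0 x h]
  norm_num

lemma area_bound (ε : ℝ) (hε : 0 < ε) (x : V2) (hx : x ≠ 0) :
    areaIntegrand (w ε) x ≤ Real.sqrt (1 + frobSq (fderiv ℝ vortex x))
      + ε^2 / (Real.sqrt (‖x‖^2+ε^2))^3 + ε^2 / (‖x‖^2+ε^2)^2 := by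
  have hx0 : 0 < ‖x‖ := norm_pos_iff.2 hx
  have h : (0:ℝ) < ‖x‖^2 + ε^2 := by positivity
  set t := ‖x‖^2 + ε^2 with ht
  set s := Real.sqrt t with hsdef
  have hss : s^2 = t := Real.sq_sqrt h.le
  have hs0 : 0 < s := Real.sqrt_pos.2 h
  have key : areaIntegrand (w ε) x = Real.sqrt ((1 + t⁻¹) * (1 + (ε^2/s^3)^2)) := by
    rw [areaIntegrand, fderiv_w ε x h, frobSq_D ε x h, detJ_D ε x h]
    congr 1
    rw [← ht, ← hss]
    field_simp
    ring
  rw [key, Real.sqrt_mul (by positivity)]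
  have e1 : Real.sqrt (1 + (ε^2/s^3)^2) ≤ 1 + ε^2/s^3 :=
    sqrt_one_add_sq_le _ (by positivity)
  have e2 : Real.sqrt (1 + t⁻¹) ≤ Real.sqrt (1 + frobSq (fderiv ℝ vortex x)) := by
    rw [frobSq_vortex x hx]
    apply Real.sqrt_le_sqrt
    have : ‖x‖^2 ≤ t := by rw [ht]; nlinarith
    have h1 : t⁻¹ ≤ (‖x‖^2)⁻¹ := by
      apply inv_anti₀ (by positivity) this
    linarith
  have e3 : Real.sqrt (1 + t⁻¹) * (ε^2/s^3) ≤ ε^2/s^3 + ε^2/t^2 := by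
    have hsq : Real.sqrt (1 + t⁻¹) = Real.sqrt (t + 1) / s := by
      rw [eq_div_iff hs0.ne', hsdef, ← Real.sqrt_mul (by positivity : (0:ℝ) ≤ 1 + t⁻¹)]
      congr 1
      field_simp
    have h2 : Real.sqrt (t+1) ≤ s + 1 := by
      rw [show s + 1 = Real.sqrt ((s+1)^2) from (Real.sqrt_sq (by positivity)).symm]
      apply Real.sqrt_le_sqrt; nlinarith
    calc Real.sqrt (1 + t⁻¹) * (ε^2/s^3) = Real.sqrt (t+1) * (ε^2/s^4) := by
          rw [hsq]; ring
      _ ≤ (s+1) * (ε^2/s^4) := by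
          apply mul_le_mul_of_nonneg_right h2 (by positivity)
      _ = ε^2/s^3 + ε^2/s^4 := by field_simp
      _ = ε^2/s^3 + ε^2/t^2 := by rw [show s^4 = t^2 by rw [← hss]; ring]
  calc Real.sqrt (1+t⁻¹) * Real.sqrt (1 + (ε^2/s^3)^2)
      ≤ Real.sqrt (1+t⁻¹) * (1 + ε^2/s^3) :=
        mul_le_mul_of_nonneg_left e1 (Real.sqrt_nonneg _)
    _ = Real.sqrt (1+t⁻¹) + Real.sqrt (1+t⁻¹) * (ε^2/s^3) := by ring
    _ ≤ Real.sqrt (1 + frobSq (fderiv ℝ vortex x)) + (ε^2/s^3 + ε^2/t^2) := by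
        exact add_le_add e2 e3
    _ = _ := by ring

lemma volume_ball_one : volume (ball (0 : V2) 1) = ENNReal.ofReal Real.pi := by
  rw [EuclideanSpace.volume_ball]
  norm_num
  rw [← ENNReal.ofReal_pow (Real.sqrt_nonneg _), Real.sq_sqrt Real.pi_pos.le]

lemma lintegral_radial (g : ℝ → ℝ≥0∞) (hg : Measurable g) :
    ∫⁻ x : V2, g ‖x‖
      = 2 * ENNReal.ofReal Real.pi * ∫⁻ r in Set.Ioi (0:ℝ), ENNReal.ofReal r * g r := by
  have hmeas : Measurable fun r : Set.Ioi (0:ℝ) => g r.1 :=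
    hg.comp measurable_subtype_coe
  have hfr : Module.finrank ℝ V2 - 1 = 1 := by
    rw [finrank_euclideanSpace_fin]
  have key := (Measure.measurePreserving_homeomorphUnitSphereProd
    (volume : Measure V2)).lintegral_comp
      (f := (fun r : Set.Ioi (0:ℝ) => g r.1) ∘ Prod.snd) (hmeas.comp measurable_snd)
  rw [hfr] at key
  calc ∫⁻ x : V2, g ‖x‖ = ∫⁻ x in ({0}ᶜ : Set V2), g ‖x‖ := by
        rw [restrict_compl_singleton]
    _ = ∫⁻ x : ({0}ᶜ : Set V2), g ‖x.1‖ ∂((volume : Measure V2).comap (↑)) :=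
        (lintegral_subtype_comap (measurableSet_singleton (0:V2)).compl _).symm
    _ = ∫⁻ p : (sphere (0:V2) 1 × Set.Ioi (0:ℝ)),
          ((fun r : Set.Ioi (0:ℝ) => g r.1) ∘ Prod.snd) p
            ∂((volume : Measure V2).toSphere.prod (.volumeIoiPow 1)) := by
          rw [← key]; simp [Function.comp_def, homeomorphUnitSphereProd_apply_snd_coe]
    _ = (volume : Measure V2).toSphere Set.univ
          * ∫⁻ r : Set.Ioi (0:ℝ), g r.1 ∂(Measure.volumeIoiPow 1) := by
        rw [lintegral_prod _ ((hmeas.comp measurable_snd).aemeasurable)]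
        simp [lintegral_const, mul_comm]
    _ = (2 * ENNReal.ofReal Real.pi)
          * ∫⁻ r : Set.Ioi (0:ℝ), g r.1 ∂(Measure.volumeIoiPow 1) := by
        congr 1
        rw [Measure.toSphere_apply_univ, volume_ball_one]
        norm_num [finrank_euclideanSpace_fin]
    _ = 2 * ENNReal.ofReal Real.pi * ∫⁻ r in Set.Ioi (0:ℝ), ENNReal.ofReal r * g r := by
        congr 1
        rw [Measure.volumeIoiPow,
          lintegral_withDensity_eq_lintegral_mul _
            (by exact (measurable_subtype_coe.pow_const 1).ennreal_ofReal) hmeas]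
        rw [← lintegral_subtype_comap measurableSet_Ioi
          (fun r : ℝ => ENNReal.ofReal r * g r)]
        congr 1
        funext r
        simp

lemma sqrt_tendsto (ε : ℝ) : Tendsto (fun r : ℝ => Real.sqrt (r^2+ε^2)) atTop atTop := by
  apply tendsto_atTop_mono (fun r => ?_) tendsto_id
  simp only [id_eq]
  calc r ≤ |r| := le_abs_self r
    _ = Real.sqrt (r^2) := (Real.sqrt_sq_eq_abs r).symm
    _ ≤ _ := Real.sqrt_le_sqrt (by nlinarith)

lemma integral_I1 (ε : ℝ) (hε : 0 < ε) :
    ∫⁻ r in Set.Ioi (0:ℝ), ENNReal.ofReal r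
        * ENNReal.ofReal (ε^2 / (Real.sqrt (r^2+ε^2))^3)
      = ENNReal.ofReal ε := by
  set F : ℝ → ℝ := fun r => ε^2 * r / (Real.sqrt (r^2+ε^2))^3 with hF
  set G : ℝ → ℝ := fun r => -(ε^2) * (Real.sqrt (r^2+ε^2))⁻¹ with hG
  have hderiv : ∀ r ∈ Set.Ici (0:ℝ), HasDerivAt G (F r) r := by
    intro r _
    have hpos : (0:ℝ) < r^2 + ε^2 := by positivity
    have hs0 : (0:ℝ) < Real.sqrt (r^2+ε^2) := Real.sqrt_pos.2 hpos
    have hu : HasDerivAt (fun r:ℝ => r^2+ε^2) (2*r) r := by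
      simpa using (hasDerivAt_pow 2 r).add_const (ε^2)
    have hs : HasDerivAt (fun r:ℝ => Real.sqrt (r^2+ε^2))
        (1/(2*Real.sqrt (r^2+ε^2)) * (2*r)) r :=
      (Real.hasDerivAt_sqrt hpos.ne').comp r hu
    have hinv := (hs.inv hs0.ne').const_mul (-(ε^2))
    have h2 : Real.sqrt (r^2+ε^2)^2 = r^2+ε^2 := Real.sq_sqrt hpos.le
    refine hinv.congr_deriv (Eq.symm ?_)
    rw [hF]
    field_simp
  have hpos' : ∀ r ∈ Set.Ioi (0:ℝ), 0 ≤ F r := by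
    intro r hr
    have : (0:ℝ) < r := hr
    rw [hF]; positivity
  have htend : Tendsto G atTop (𝓝 0) := by
    rw [hG]
    have := ((sqrt_tendsto ε).inv_tendsto_atTop).const_mul (-(ε^2))
    simpa using this
  have hval : ∫ r in Set.Ioi (0:ℝ), F r = ε := by
    rw [integral_Ioi_of_hasDerivAt_of_nonneg' hderiv hpos' htend, hG]
    simp only [zero_sub]
    rw [show (0:ℝ)^2 + ε^2 = ε^2 by ring, Real.sqrt_sq hε.le]
    field_simp
  have hint : IntegrableOn F (Set.Ioi (0:ℝ)) :=
    integrableOn_Ioi_deriv_of_nonneg' hderiv hpos' htend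
  calc ∫⁻ r in Set.Ioi (0:ℝ), ENNReal.ofReal r
        * ENNReal.ofReal (ε^2 / (Real.sqrt (r^2+ε^2))^3)
      = ∫⁻ r in Set.Ioi (0:ℝ), ENNReal.ofReal (F r) := by
        apply setLIntegral_congr_fun measurableSet_Ioi
        intro r hr
        dsimp only
        rw [← ENNReal.ofReal_mul (le_of_lt hr), hF]
        congr 1
        ring
    _ = ENNReal.ofReal (∫ r in Set.Ioi (0:ℝ), F r) := by
        rw [← ofReal_integral_eq_lintegral_ofReal hint]
        filter_upwards [ae_restrict_mem measurableSet_Ioi] with r hr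
        exact hpos' r hr
    _ = ENNReal.ofReal ε := by rw [hval]

lemma integral_I2 (ε : ℝ) (hε : 0 < ε) :
    ∫⁻ r in Set.Ioi (0:ℝ), ENNReal.ofReal r
        * ENNReal.ofReal (ε^2 / (r^2+ε^2)^2)
      = ENNReal.ofReal (1/2 : ℝ) := by
  set F : ℝ → ℝ := fun r => ε^2 * r / (r^2+ε^2)^2 with hF
  set G : ℝ → ℝ := fun r => (-(ε^2)/2) * (r^2+ε^2)⁻¹ with hG
  have hderiv : ∀ r ∈ Set.Ici (0:ℝ), HasDerivAt G (F r) r := by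
    intro r _
    have hpos : (0:ℝ) < r^2 + ε^2 := by positivity
    have hu : HasDerivAt (fun r:ℝ => r^2+ε^2) (2*r) r := by
      simpa using (hasDerivAt_pow 2 r).add_const (ε^2)
    have hinv := (hu.inv hpos.ne').const_mul (-(ε^2)/2)
    refine hinv.congr_deriv (Eq.symm ?_)
    rw [hF]
    field_simp
  have hpos' : ∀ r ∈ Set.Ioi (0:ℝ), 0 ≤ F r := by
    intro r hr
    have : (0:ℝ) < r := hr
    rw [hF]; positivity
  have htend : Tendsto G atTop (𝓝 0) := by
    rw [hG]
    have h1 : Tendsto (fun r : ℝ => r^2+ε^2) atTop atTop :=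
      tendsto_atTop_add_const_right _ _ (tendsto_pow_atTop two_ne_zero)
    have := (h1.inv_tendsto_atTop).const_mul (-(ε^2)/2)
    simpa using this
  have hval : ∫ r in Set.Ioi (0:ℝ), F r = 1/2 := by
    rw [integral_Ioi_of_hasDerivAt_of_nonneg' hderiv hpos' htend, hG]
    simp only [zero_sub]
    rw [show (0:ℝ)^2 + ε^2 = ε^2 by ring]
    field_simp
  have hint : IntegrableOn F (Set.Ioi (0:ℝ)) :=
    integrableOn_Ioi_deriv_of_nonneg' hderiv hpos' htend
  calc ∫⁻ r in Set.Ioi (0:ℝ), ENNReal.ofReal r * ENNReal.ofReal (ε^2 / (r^2+ε^2)^2)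
      = ∫⁻ r in Set.Ioi (0:ℝ), ENNReal.ofReal (F r) := by
        apply setLIntegral_congr_fun measurableSet_Ioi
        intro r hr
        dsimp only
        rw [← ENNReal.ofReal_mul (le_of_lt hr), hF]
        congr 1
        ring
    _ = ENNReal.ofReal (∫ r in Set.Ioi (0:ℝ), F r) := by
        rw [← ofReal_integral_eq_lintegral_ofReal hint]
        filter_upwards [ae_restrict_mem measurableSet_Ioi] with r hr
        exact hpos' r hr
    _ = ENNReal.ofReal (1/2 : ℝ) := by rw [hval]



lemma continuous_frobSq : Continuous frobSq := by
  unfold frobSq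
  refine continuous_finset_sum _ (fun i _ => continuous_finset_sum _ (fun j _ => ?_))
  have h1 : Continuous fun L : V2 →L[ℝ] V2 => L (EuclideanSpace.single j 1) :=
    (ContinuousLinearMap.apply ℝ V2 (EuclideanSpace.single j 1)).continuous
  exact ((continuous_apply i).comp ((PiLp.continuous_ofLp 2 _).comp h1)).pow 2

lemma meas_A : Measurable fun x : V2 =>
    ENNReal.ofReal (Real.sqrt (1 + frobSq (fderiv ℝ vortex x))) := by
  have m1 : Measurable fun x : V2 => frobSq (fderiv ℝ vortex x) :=
    continuous_frobSq.measurable.comp (measurable_fderiv ℝ vortex)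
  exact ((measurable_const.add m1).sqrt).ennreal_ofReal

lemma contB (ε : ℝ) (hε : 0 < ε) :
    Continuous fun r : ℝ => ε^2 / (Real.sqrt (r^2+ε^2))^3 := by
  have hc : Continuous fun r : ℝ => (Real.sqrt (r^2+ε^2))^3 :=
    (Real.continuous_sqrt.comp (by continuity)).pow 3
  exact continuous_const.div hc (fun r => by positivity)

lemma contC (ε : ℝ) (hε : 0 < ε) :
    Continuous fun r : ℝ => ε^2 / (r^2+ε^2)^2 := by
  have hc : Continuous fun r : ℝ => (r^2+ε^2)^2 := by continuity
  exact continuous_const.div hc (fun r => by positivity)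

lemma two_pi_half : (2 : ℝ≥0∞) * ENNReal.ofReal Real.pi * ENNReal.ofReal (1/2 : ℝ)
    = ENNReal.ofReal Real.pi := by
  rw [show (2:ℝ≥0∞) = ENNReal.ofReal 2 by simp, ← ENNReal.ofReal_mul (by norm_num),
    ← ENNReal.ofReal_mul (by positivity)]
  congr 1
  ring

lemma two_pi_eps (ε : ℝ) (hε : 0 < ε) :
    (2 : ℝ≥0∞) * ENNReal.ofReal Real.pi * ENNReal.ofReal ε
      = ENNReal.ofReal (2 * Real.pi * ε) := by
  rw [show (2:ℝ≥0∞) = ENNReal.ofReal 2 by simp, ← ENNReal.ofReal_mul (by norm_num),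
    ← ENNReal.ofReal_mul (by positivity)]

lemma graphArea_bound (l ε : ℝ) (hε : 0 < ε) :
    graphArea (w ε) (ball (0:V2) l)
      ≤ vortexGradArea l + (ENNReal.ofReal (2*Real.pi*ε) + ENNReal.ofReal Real.pi) := by
  set fA : V2 → ℝ≥0∞ := fun x => ENNReal.ofReal (Real.sqrt (1 + frobSq (fderiv ℝ vortex x)))
    with hfA
  set fB : V2 → ℝ≥0∞ := fun x => ENNReal.ofReal (ε^2 / (Real.sqrt (‖x‖^2+ε^2))^3) with hfB
  set fC : V2 → ℝ≥0∞ := fun x => ENNReal.ofReal (ε^2 / (‖x‖^2+ε^2)^2) with hfC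
  have hstep1 : graphArea (w ε) (ball (0:V2) l)
      ≤ ∫⁻ x in ball (0:V2) l, (fA x + fB x + fC x) := by
    apply lintegral_mono_ae
    have h0 : ∀ᵐ x ∂(volume.restrict (ball (0:V2) l)), x ≠ (0:V2) := by
      refine ae_restrict_of_ae ?_
      have hset : {x : V2 | ¬ x ≠ 0} = {0} := by ext x; simp
      rw [ae_iff, hset]
      exact measure_singleton 0
    filter_upwards [h0] with x hx
    have hb := area_bound ε hε x hx
    calc ENNReal.ofReal (areaIntegrand (w ε) x)
        ≤ ENNReal.ofReal (Real.sqrt (1 + frobSq (fderiv ℝ vortex x))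
            + ε^2 / (Real.sqrt (‖x‖^2+ε^2))^3 + ε^2 / (‖x‖^2+ε^2)^2) :=
          ENNReal.ofReal_le_ofReal hb
      _ = fA x + fB x + fC x := by
          rw [ENNReal.ofReal_add (by positivity) (by positivity),
            ENNReal.ofReal_add (Real.sqrt_nonneg _) (by positivity)]
  have hmB : Measurable fB :=
    (((contB ε hε).comp continuous_norm).measurable).ennreal_ofReal
  have hmC : Measurable fC :=
    (((contC ε hε).comp continuous_norm).measurable).ennreal_ofReal
  have hsplit : ∫⁻ x in ball (0:V2) l, (fA x + fB x + fC x)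
      = (∫⁻ x in ball (0:V2) l, fA x) + (∫⁻ x in ball (0:V2) l, fB x)
        + (∫⁻ x in ball (0:V2) l, fC x) := by
    rw [lintegral_add_left (f := fun x => fA x + fB x) (meas_A.add hmB), lintegral_add_left meas_A]
  have hBint : (∫⁻ x in ball (0:V2) l, fB x) ≤ ENNReal.ofReal (2*Real.pi*ε) := by
    calc (∫⁻ x in ball (0:V2) l, fB x) ≤ ∫⁻ x : V2, fB x :=
          lintegral_mono' Measure.restrict_le_self le_rfl
      _ = 2 * ENNReal.ofReal Real.pi * ∫⁻ r in Set.Ioi (0:ℝ),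
            ENNReal.ofReal r * ENNReal.ofReal (ε^2 / (Real.sqrt (r^2+ε^2))^3) :=
          lintegral_radial _ ((contB ε hε).measurable.ennreal_ofReal)
      _ = ENNReal.ofReal (2*Real.pi*ε) := by rw [integral_I1 ε hε, two_pi_eps ε hε]
  have hCint : (∫⁻ x in ball (0:V2) l, fC x) ≤ ENNReal.ofReal Real.pi := by
    calc (∫⁻ x in ball (0:V2) l, fC x) ≤ ∫⁻ x : V2, fC x :=
          lintegral_mono' Measure.restrict_le_self le_rfl
      _ = 2 * ENNReal.ofReal Real.pi * ∫⁻ r in Set.Ioi (0:ℝ),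
            ENNReal.ofReal r * ENNReal.ofReal (ε^2 / (r^2+ε^2)^2) :=
          lintegral_radial _ ((contC ε hε).measurable.ennreal_ofReal)
      _ = ENNReal.ofReal Real.pi := by rw [integral_I2 ε hε, two_pi_half]
  calc graphArea (w ε) (ball (0:V2) l)
      ≤ (∫⁻ x in ball (0:V2) l, fA x) + (∫⁻ x in ball (0:V2) l, fB x)
        + (∫⁻ x in ball (0:V2) l, fC x) := by rw [← hsplit]; exact hstep1
    _ ≤ vortexGradArea l + ENNReal.ofReal (2*Real.pi*ε) + ENNReal.ofReal Real.pi := by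
        exact add_le_add (add_le_add le_rfl hBint) hCint
    _ = vortexGradArea l + (ENNReal.ofReal (2*Real.pi*ε) + ENNReal.ofReal Real.pi) := by
        rw [add_assoc]

lemma norm_w_le (ε : ℝ) (x : V2) : ‖w ε x‖ ≤ 1 := by
  rw [w, norm_smul, norm_inv, Real.norm_eq_abs,
    abs_of_nonneg (Real.sqrt_nonneg _)]
  rcases eq_or_ne x 0 with rfl | hx
  · simp
  · have hx0 : 0 < ‖x‖ := norm_pos_iff.2 hx
    have h1 : ‖x‖ ≤ Real.sqrt (‖x‖^2 + ε^2) := by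
      calc ‖x‖ = Real.sqrt (‖x‖^2) := (Real.sqrt_sq hx0.le).symm
        _ ≤ Real.sqrt (‖x‖^2 + ε^2) := Real.sqrt_le_sqrt (by nlinarith [sq_nonneg ε])
    have h2 : 0 < Real.sqrt (‖x‖^2 + ε^2) := lt_of_lt_of_le hx0 h1
    rw [inv_mul_le_iff₀ h2]
    simpa using h1

lemma norm_vortex_le (x : V2) : ‖vortex x‖ ≤ 1 := by
  rw [vortex, norm_smul, norm_inv, norm_norm]
  rcases eq_or_ne x 0 with rfl | hx
  · simp
  · have hx0 : 0 < ‖x‖ := norm_pos_iff.2 hx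
    rw [inv_mul_le_iff₀ hx0]
    simp

lemma tendsto_L1 (l : ℝ) :
    Tendsto (fun k : ℕ => ∫⁻ x in ball (0:V2) l,
        ENNReal.ofReal ‖w (((k:ℝ)+1)⁻¹) x - vortex x‖) atTop (𝓝 0) := by
  have hεk : Tendsto (fun k : ℕ => ((k:ℝ)+1)⁻¹) atTop (𝓝 0) := by
    simpa using tendsto_one_div_add_atTop_nhds_zero_nat (𝕜 := ℝ)
  have mv : Measurable vortex := by
    apply Measurable.smul (measurable_norm.inv) measurable_id
  have hmeasF : ∀ k : ℕ, Measurable fun x : V2 =>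
      ENNReal.ofReal ‖w (((k:ℝ)+1)⁻¹) x - vortex x‖ := by
    intro k
    have hw : Continuous (w (((k:ℝ)+1)⁻¹)) :=
      (contDiff_w _ (by positivity)).continuous
    exact ((hw.measurable.sub mv).norm).ennreal_ofReal
  have hbound : ∀ k : ℕ, ∀ᵐ x ∂(volume.restrict (ball (0:V2) l)),
      ENNReal.ofReal ‖w (((k:ℝ)+1)⁻¹) x - vortex x‖ ≤ (2 : ℝ≥0∞) := by
    intro k
    filter_upwards with x
    calc ENNReal.ofReal ‖w (((k:ℝ)+1)⁻¹) x - vortex x‖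
        ≤ ENNReal.ofReal 2 := by
          apply ENNReal.ofReal_le_ofReal
          calc ‖w (((k:ℝ)+1)⁻¹) x - vortex x‖ ≤ ‖w (((k:ℝ)+1)⁻¹) x‖ + ‖vortex x‖ :=
                norm_sub_le _ _
            _ ≤ 1 + 1 := add_le_add (norm_w_le _ x) (norm_vortex_le x)
            _ = 2 := by norm_num
      _ = 2 := by simp
  have hfin : ∫⁻ _ in ball (0:V2) l, (2:ℝ≥0∞) ∂volume ≠ ⊤ := by
    rw [setLIntegral_const]
    exact ENNReal.mul_ne_top (by simp) measure_ball_lt_top.ne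
  have hlim : ∀ᵐ x ∂(volume.restrict (ball (0:V2) l)),
      Tendsto (fun k : ℕ => ENNReal.ofReal ‖w (((k:ℝ)+1)⁻¹) x - vortex x‖)
        atTop (𝓝 0) := by
    have h0 : ∀ᵐ x ∂(volume.restrict (ball (0:V2) l)), x ≠ (0:V2) := by
      refine ae_restrict_of_ae ?_
      have hset : {x : V2 | ¬ x ≠ 0} = {0} := by ext x; simp
      rw [ae_iff, hset]
      exact measure_singleton 0
    filter_upwards [h0] with x hx
    have hx0 : 0 < ‖x‖ := norm_pos_iff.2 hx
    have h1 : Tendsto (fun k : ℕ => Real.sqrt (‖x‖^2 + (((k:ℝ)+1)⁻¹)^2))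
        atTop (𝓝 ‖x‖) := by
      have : Tendsto (fun k : ℕ => ‖x‖^2 + (((k:ℝ)+1)⁻¹)^2) atTop (𝓝 (‖x‖^2 + 0^2)) :=
        tendsto_const_nhds.add ((hεk.pow 2))
      have h2 := (Real.continuous_sqrt.tendsto _).comp this
      simpa [Real.sqrt_sq hx0.le, Function.comp_def] using h2
    have h2 : Tendsto (fun k : ℕ => (Real.sqrt (‖x‖^2 + (((k:ℝ)+1)⁻¹)^2))⁻¹)
        atTop (𝓝 ‖x‖⁻¹) := h1.inv₀ hx0.ne'
    have h3 : Tendsto (fun k : ℕ => w (((k:ℝ)+1)⁻¹) x) atTop (𝓝 (vortex x)) := by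
      rw [vortex]
      exact h2.smul_const x
    have h4 : Tendsto (fun k : ℕ => ‖w (((k:ℝ)+1)⁻¹) x - vortex x‖) atTop (𝓝 0) := by
      have h5 : Tendsto (fun k : ℕ => w (((k:ℝ)+1)⁻¹) x - vortex x) atTop
          (𝓝 (vortex x - vortex x)) := h3.sub tendsto_const_nhds
      rw [sub_self] at h5
      simpa using h5.norm
    have := (ENNReal.continuous_ofReal.tendsto _).comp h4
    simpa [Function.comp_def] using this
  have := tendsto_lintegral_of_dominated_convergence (μ := volume.restrict (ball (0:V2) l))
    (fun _ => (2:ℝ≥0∞)) hmeasF hbound hfin hlim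
  simpa using this

/-- The relaxed area of the graph of the vortex map over `B_l` is at most
`∫_{B_l} √(1 + |∇u|²) dx + π`, for every `l > 0`. -/
theorem relaxedArea_vortex_le (l : ℝ) (hl : 0 < l) :
    relaxedArea l ≤ vortexGradArea l + ENNReal.ofReal Real.pi := by
  set v : ℕ → V2 → V2 := fun k => w (((k:ℝ)+1)⁻¹) with hv
  have hsm : ∀ k, ContDiffOn ℝ 1 (v k) (ball (0:V2) l) := fun k =>
    (contDiff_w _ (by positivity)).contDiffOn
  have hL1 : Tendsto (fun k => ∫⁻ x in ball (0:V2) l,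
      ENNReal.ofReal ‖v k x - vortex x‖) atTop (𝓝 0) := tendsto_L1 l
  have h1 : relaxedArea l
      ≤ Filter.liminf (fun k => graphArea (v k) (ball (0:V2) l)) atTop := by
    apply sInf_le
    exact ⟨v, hsm, hL1, rfl⟩
  refine h1.trans ?_
  have hb : ∀ k : ℕ, graphArea (v k) (ball (0:V2) l)
      ≤ vortexGradArea l
        + (ENNReal.ofReal (2*Real.pi*((k:ℝ)+1)⁻¹) + ENNReal.ofReal Real.pi) :=
    fun k => graphArea_bound l _ (by positivity)
  have hlim : Tendsto (fun k : ℕ => vortexGradArea l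
      + (ENNReal.ofReal (2*Real.pi*((k:ℝ)+1)⁻¹) + ENNReal.ofReal Real.pi)) atTop
      (𝓝 (vortexGradArea l + (0 + ENNReal.ofReal Real.pi))) := by
    refine tendsto_const_nhds.add (Filter.Tendsto.add ?_ tendsto_const_nhds)
    have h2 : Tendsto (fun k : ℕ => 2*Real.pi*((k:ℝ)+1)⁻¹) atTop (𝓝 0) := by
      have h3 : Tendsto (fun k : ℕ => ((k:ℝ)+1)⁻¹) atTop (𝓝 0) := by
        simpa using tendsto_one_div_add_atTop_nhds_zero_nat (𝕜 := ℝ)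
      have h4 := h3.const_mul (2*Real.pi)
      simpa [mul_zero] using h4
    have h5 := (ENNReal.continuous_ofReal.tendsto 0).comp h2
    simpa [Function.comp_def] using h5
  calc Filter.liminf (fun k => graphArea (v k) (ball (0:V2) l)) atTop
      ≤ Filter.liminf (fun k : ℕ => vortexGradArea l
          + (ENNReal.ofReal (2*Real.pi*((k:ℝ)+1)⁻¹) + ENNReal.ofReal Real.pi)) atTop :=
        Filter.liminf_le_liminf (Filter.Eventually.of_forall hb)
    _ = vortexGradArea l + (0 + ENNReal.ofReal Real.pi) := hlim.liminf_eq
    _ = vortexGradArea l + ENNReal.ofReal Real.pi := by rw [zero_add]
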